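/- Let K, K₀ ∈ 𝒦^{n*} and let r = d_H(K,K₀) be their Hausdorff distance. Then θ^c(K) ≤ (1+r)^{2n}·θ^c(K₀). -/

import Mathlib

/-!
Put `r = d_H(K, K₀)` and `c = 1 + r`. Since `K` and `K₀` are convex and contain `Bⁿ`, the
`r`-neighbourhood of either one lies in `c` times it, so `K ⊆ c K₀` and `K₀ ⊆ c K`. If `{g(K₀)}`
covers `ℝⁿ`, then so do the copies `c⁻¹ g(c K) ⊇ c⁻¹ g(K₀)` of `K` under the conjugated isometries
`x ↦ c⁻¹ g(c x)`; this system is the system `{g(c K)}` shrunk by `c⁻¹`, hence has the same density.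
Finally, as all the bodies are bounded, replacing each `g(K₀)` by `g(c K)` multiplies the density
by at most `vol(c K) / vol(K₀) ≤ cⁿ · cⁿ`.
-/

open Metric Set Pointwise MeasureTheory Filter ENNReal

/-- The density of the system of congruent copies `{g(K) : g ∈ S}` of `K`, for a set `S` of
isometries of `ℝⁿ`: `limsup_{R → ∞} (∑_{g ∈ S} vol(g(K) ∩ R·Bⁿ)) / vol(R·Bⁿ)`. -/
noncomputable def congrDensity (n : ℕ)
    (S : Set (EuclideanSpace ℝ (Fin n) ≃ᵢ EuclideanSpace ℝ (Fin n)))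
    (K : Set (EuclideanSpace ℝ (Fin n))) : ℝ≥0∞ :=
  Filter.limsup
    (fun R : ℝ =>
      (∑' g : S, volume (((g : EuclideanSpace ℝ (Fin n) ≃ᵢ EuclideanSpace ℝ (Fin n)) '' K) ∩
        closedBall 0 R)) / volume (closedBall (0 : EuclideanSpace ℝ (Fin n)) R))
    Filter.atTop

/-- The congruent covering density `θ^c(K)`: the infimum of the densities of countable families
of congruent copies of `K` that cover `ℝⁿ`. -/
noncomputable def thetaC (n : ℕ) (K : Set (EuclideanSpace ℝ (Fin n))) : ℝ≥0∞ :=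
  ⨅ (S : Set (EuclideanSpace ℝ (Fin n) ≃ᵢ EuclideanSpace ℝ (Fin n)))
    (_ : S.Countable ∧ ⋃ g ∈ S, g '' K = Set.univ), congrDensity n S K

open scoped Topology

namespace IsometryEquiv

variable {𝕜 E : Type*} [NormedField 𝕜] [NormedAddCommGroup E] [NormedSpace 𝕜 E]

noncomputable def conjSMul (c : 𝕜) (hc : c ≠ 0) (g : E ≃ᵢ E) : E ≃ᵢ E where
  toFun x := c⁻¹ • g (c • x)
  invFun y := c⁻¹ • g.symm (c • y)
  left_inv x := by simp [smul_smul, hc]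
  right_inv y := by simp [smul_smul, hc]
  isometry_toFun := Isometry.of_dist_eq fun x y => by
    rw [dist_smul₀, g.dist_eq, dist_smul₀, ← mul_assoc, ← norm_mul, inv_mul_cancel₀ hc,
      norm_one, one_mul]

theorem image_conjSMul (c : 𝕜) (hc : c ≠ 0) (g : E ≃ᵢ E) (A : Set E) :
    conjSMul c hc g '' A = c⁻¹ • g '' (c • A) := by
  simp only [← image_smul, image_image]
  rfl

theorem iUnion_image_conjSMul_eq_univ {c : 𝕜} (hc : c ≠ 0) {S : Set (E ≃ᵢ E)} {L L₀ : Set E}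
    (hS : ⋃ g ∈ S, g '' L₀ = univ) (hL₀ : L₀ ⊆ c • L) :
    ⋃ h ∈ conjSMul c hc '' S, h '' L = univ := by
  refine eq_univ_of_univ_subset ?_
  rw [biUnion_image, ← smul_set_univ₀ (inv_ne_zero hc), ← hS, smul_set_iUnion₂]
  exact iUnion₂_mono fun g _ => (image_conjSMul c hc g L).symm ▸ smul_set_mono (image_mono hL₀)

end IsometryEquiv

section Normed

variable {E : Type*} [NormedAddCommGroup E] [NormedSpace ℝ E]

theorem Convex.add_closedBall_zero_subset_smul {A : Set E} (hA : Convex ℝ A)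
    (hball : closedBall 0 1 ⊆ A) {r : ℝ} (hr : 0 ≤ r) :
    A + closedBall 0 r ⊆ (1 + r) • A := by
  rw [hA.add_smul zero_le_one hr, one_smul, ← smul_unitClosedBall_of_nonneg hr]
  exact add_subset_add_left (smul_set_mono hball)

theorem IsCompact.subset_one_add_hausdorffDist_smul {A B : Set E} (hA : IsCompact A)
    (hAconv : Convex ℝ A) (hball : closedBall 0 1 ⊆ A) (hfin : hausdorffEDist B A ≠ ⊤) :
    B ⊆ (1 + hausdorffDist B A) • A := by
  refine fun x hx => hAconv.add_closedBall_zero_subset_smul hball hausdorffDist_nonneg ?_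
  rw [hA.add_closedBall_zero hausdorffDist_nonneg, mem_cthickening_iff, hausdorffDist,
    ofReal_toReal hfin]
  exact infEDist_le_hausdorffEDist_of_mem hx

end Normed

theorem subset_closedBall_of_inter_closedBall_nonempty {X : Type*} [PseudoMetricSpace X]
    {s t : Set X} {z y : X} {ρ R : ℝ} (hs : s ⊆ closedBall z ρ) (ht : t ⊆ closedBall z ρ)
    (hst : (s ∩ closedBall y R).Nonempty) : t ⊆ closedBall y (R + 2 * ρ) := by
  obtain ⟨p, hps, hpy⟩ := hst
  intro q hq
  have hpz := mem_closedBall.1 (hs hps)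
  have hqz := mem_closedBall.1 (ht hq)
  rw [mem_closedBall] at hpy ⊢
  linarith [dist_triangle q z p, dist_triangle q p y, dist_comm p z]

section Euclidean

variable {n : ℕ}

local notation "𝔼" => EuclideanSpace ℝ (Fin n)

namespace EuclideanSpace

theorem volume_image_isometryEquiv (g : 𝔼 ≃ᵢ 𝔼) (A : Set 𝔼) :
    volume (g '' A) = volume A := by
  rw [← EuclideanSpace.euclideanHausdorffMeasure_eq_volume]
  exact g.isometry.euclideanHausdorffMeasure_image A

theorem volume_smul_of_nonneg {t : ℝ} (ht : 0 ≤ t) (A : Set 𝔼) :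
    volume (t • A) = ENNReal.ofReal (t ^ n) * volume A := by
  rw [Measure.addHaar_smul_of_nonneg volume ht, finrank_euclideanSpace_fin]

theorem tendsto_volume_closedBall_add_div (M : ℝ) :
    Tendsto (fun R => volume (closedBall (0 : 𝔼) (R + M)) / volume (closedBall (0 : 𝔼) R))
      atTop (𝓝 1) := by
  have hlim : Tendsto (fun R : ℝ => (1 + M / R) ^ n) atTop (𝓝 1) := by
    simpa using ((tendsto_const_nhds (x := M) |>.div_atTop tendsto_id).const_add 1).pow n
  rw [← ENNReal.ofReal_one]
  refine (ENNReal.tendsto_ofReal hlim).congr' ?_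
  filter_upwards [eventually_gt_atTop 0, eventually_ge_atTop (-M)] with R hR hRM
  have hscale : 0 ≤ 1 + M / R := by
    rw [one_add_div hR.ne']
    exact div_nonneg (by linarith) hR.le
  have hball : closedBall (0 : 𝔼) (R + M) = (1 + M / R) • closedBall 0 R := by
    rw [_root_.smul_closedBall _ _ hR.le, smul_zero, Real.norm_of_nonneg hscale]
    field_simp
  rw [hball, volume_smul_of_nonneg hscale, ENNReal.mul_div_cancel_right
    (measure_closedBall_pos volume 0 hR).ne' measure_closedBall_lt_top.ne]

end EuclideanSpace

open EuclideanSpace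

noncomputable def localCongrDensity (S : Set (𝔼 ≃ᵢ 𝔼)) (K : Set 𝔼) (R : ℝ) : ℝ≥0∞ :=
  (∑' g : S, volume ((g : 𝔼 ≃ᵢ 𝔼) '' K ∩ closedBall 0 R)) / volume (closedBall (0 : 𝔼) R)

theorem congrDensity_eq_limsup (S : Set (𝔼 ≃ᵢ 𝔼)) (K : Set 𝔼) :
    congrDensity n S K = limsup (localCongrDensity S K) atTop :=
  rfl

open IsometryEquiv in
theorem localCongrDensity_conjSMul_le {c : ℝ} (hc : 0 < c) (S : Set (𝔼 ≃ᵢ 𝔼)) (L : Set 𝔼)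
    {R : ℝ} (hR : 0 ≤ R) :
    localCongrDensity (conjSMul c hc.ne' '' S) L R ≤ localCongrDensity S (c • L) (c * R) := by
  have hc' : 0 ≤ c⁻¹ := inv_nonneg.2 hc.le
  have hball : closedBall (0 : 𝔼) R = c⁻¹ • closedBall 0 (c * R) := by
    rw [_root_.smul_closedBall _ _ (by positivity), smul_zero, Real.norm_of_nonneg hc',
      inv_mul_cancel_left₀ hc.ne']
  have hterm (g : 𝔼 ≃ᵢ 𝔼) : volume (conjSMul c hc.ne' g '' L ∩ closedBall 0 R) =
      ENNReal.ofReal (c⁻¹ ^ n) * volume (g '' (c • L) ∩ closedBall 0 (c * R)) := by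
    rw [image_conjSMul, hball, ← smul_set_inter₀ (inv_ne_zero hc.ne'), volume_smul_of_nonneg hc']
  have hsurj : Function.Surjective fun g : S =>
      (⟨conjSMul c hc.ne' g, mem_image_of_mem _ g.2⟩ : conjSMul c hc.ne' '' S) := by
    rintro ⟨_, g, hg, rfl⟩
    exact ⟨⟨g, hg⟩, rfl⟩
  calc localCongrDensity (conjSMul c hc.ne' '' S) L R
      ≤ (∑' g : S, volume (conjSMul c hc.ne' g '' L ∩ closedBall 0 R)) /
          volume (closedBall (0 : 𝔼) R) := by
        unfold localCongrDensity
        gcongr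
        exact ENNReal.tsum_le_tsum_comp_of_surjective hsurj _
    _ = localCongrDensity S (c • L) (c * R) := by
        simp only [hterm, ENNReal.tsum_mul_left]
        rw [hball, volume_smul_of_nonneg hc', ENNReal.mul_div_mul_left _ _
          (ENNReal.ofReal_pos.2 (by positivity)).ne' ofReal_ne_top]
        rfl

theorem congrDensity_conjSMul_le {c : ℝ} (hc : 0 < c) (S : Set (𝔼 ≃ᵢ 𝔼)) (L : Set 𝔼) :
    congrDensity n (IsometryEquiv.conjSMul c hc.ne' '' S) L ≤ congrDensity n S (c • L) := by
  rw [congrDensity_eq_limsup, congrDensity_eq_limsup]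
  calc _ ≤ limsup (localCongrDensity S (c • L) ∘ (c * ·)) atTop :=
        limsup_le_limsup ((eventually_ge_atTop 0).mono fun R hR =>
          localCongrDensity_conjSMul_le hc S L hR)
    _ ≤ _ := (tendsto_id.const_mul_atTop hc).limsup_comp_le_limsup

theorem localCongrDensity_le_mul (S : Set (𝔼 ≃ᵢ 𝔼)) {L L₀ : Set 𝔼} {ρ : ℝ}
    (hρ : 0 ≤ ρ) (hL : L ⊆ closedBall 0 ρ) (hL₀ : L₀ ⊆ closedBall 0 ρ)
    {a : ℝ≥0∞} (hvol : volume L ≤ a * volume L₀) {R : ℝ} (hR : 0 < R) :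
    localCongrDensity S L R ≤ a * (localCongrDensity S L₀ (R + 2 * ρ) *
      (volume (closedBall (0 : 𝔼) (R + 2 * ρ)) / volume (closedBall (0 : 𝔼) R))) := by
  have hterm (g : 𝔼 ≃ᵢ 𝔼) :
      volume (g '' L ∩ closedBall 0 R) ≤ a * volume (g '' L₀ ∩ closedBall 0 (R + 2 * ρ)) := by
    rcases (g '' L ∩ closedBall 0 R).eq_empty_or_nonempty with hempty | hmeets
    · simp [hempty]
    have hsub : g '' L₀ ⊆ closedBall 0 (R + 2 * ρ) :=
      subset_closedBall_of_inter_closedBall_nonempty (g.image_closedBall 0 ρ ▸ image_mono hL)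
        (g.image_closedBall 0 ρ ▸ image_mono hL₀) hmeets
    calc volume (g '' L ∩ closedBall 0 R) ≤ volume L :=
          (measure_mono inter_subset_left).trans_eq (volume_image_isometryEquiv g L)
      _ ≤ a * volume L₀ := hvol
      _ = a * volume (g '' L₀ ∩ closedBall 0 (R + 2 * ρ)) := by
          rw [inter_eq_left.2 hsub, volume_image_isometryEquiv]
  have hR' : 0 < R + 2 * ρ := by positivity
  have hpos := (measure_closedBall_pos volume (0 : 𝔼) hR').ne'
  have hfin := (measure_closedBall_lt_top (μ := volume) (x := (0 : 𝔼)) (r := R + 2 * ρ)).ne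
  unfold localCongrDensity
  calc (∑' g : S, volume ((g : 𝔼 ≃ᵢ 𝔼) '' L ∩ closedBall 0 R)) / volume (closedBall (0 : 𝔼) R)
      ≤ (a * ∑' g : S, volume ((g : 𝔼 ≃ᵢ 𝔼) '' L₀ ∩ closedBall 0 (R + 2 * ρ))) /
          volume (closedBall (0 : 𝔼) R) := by
        rw [← ENNReal.tsum_mul_left]
        gcongr with g
        exact hterm g
    _ = _ := by
        simp only [div_eq_mul_inv, mul_assoc]
        rw [← mul_assoc _ (volume (closedBall (0 : 𝔼) (R + 2 * ρ))),
          ENNReal.inv_mul_cancel hpos hfin, one_mul]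

theorem congrDensity_le_mul_of_volume_le (S : Set (𝔼 ≃ᵢ 𝔼)) {L L₀ : Set 𝔼}
    (hL : Bornology.IsBounded L) (hL₀ : Bornology.IsBounded L₀) {a : ℝ≥0∞} (ha : a ≠ ⊤)
    (hvol : volume L ≤ a * volume L₀) :
    congrDensity n S L ≤ a * congrDensity n S L₀ := by
  obtain ⟨ρ, hρ, hLρ⟩ := (hL.union hL₀).subset_closedBall_lt 0 0
  have hratio := tendsto_volume_closedBall_add_div (n := n) (2 * ρ)
  rw [congrDensity_eq_limsup, congrDensity_eq_limsup]
  calc limsup (localCongrDensity S L) atTop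
      ≤ limsup (fun R => a * ((localCongrDensity S L₀ ∘ (· + 2 * ρ)) R *
          (volume (closedBall (0 : 𝔼) (R + 2 * ρ)) / volume (closedBall (0 : 𝔼) R)))) atTop :=
        limsup_le_limsup ((eventually_gt_atTop 0).mono fun R hR =>
          localCongrDensity_le_mul S hρ.le (subset_union_left.trans hLρ)
            (subset_union_right.trans hLρ) hvol hR)
    _ = a * limsup ((localCongrDensity S L₀ ∘ (· + 2 * ρ)) *
          fun R => volume (closedBall (0 : 𝔼) (R + 2 * ρ)) / volume (closedBall (0 : 𝔼) R))
          atTop :=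
        ENNReal.limsup_const_mul_of_ne_top ha
    _ ≤ a * limsup (localCongrDensity S L₀ ∘ (· + 2 * ρ)) atTop := by
        grw [ENNReal.limsup_mul_le' (by simp [hratio.limsup_eq]) (by simp [hratio.limsup_eq]),
          hratio.limsup_eq, mul_one]
    _ ≤ a * limsup (localCongrDensity S L₀) atTop := by
        gcongr
        exact (tendsto_atTop_add_const_right _ _ tendsto_id).limsup_comp_le_limsup

theorem thetaC_le_mul_of_subset_smul {K K₀ : Set 𝔼} (hK : Bornology.IsBounded K)
    (hK₀ : Bornology.IsBounded K₀) {c : ℝ} (hc : 0 < c) (hK₀K : K₀ ⊆ c • K) {a : ℝ≥0∞}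
    (ha₀ : a ≠ 0) (ha : a ≠ ⊤) (hvol : volume (c • K) ≤ a * volume K₀) :
    thetaC n K ≤ a * thetaC n K₀ := by
  unfold thetaC
  simp only [ENNReal.mul_iInf_of_ne ha₀ ha]
  refine le_iInf fun S => le_iInf fun ⟨hSc, hScov⟩ => ?_
  calc _ ≤ congrDensity n (IsometryEquiv.conjSMul c hc.ne' '' S) K :=
        iInf₂_le _ ⟨hSc.image _, IsometryEquiv.iUnion_image_conjSMul_eq_univ hc.ne' hScov hK₀K⟩
    _ ≤ congrDensity n S (c • K) := congrDensity_conjSMul_le hc S K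
    _ ≤ a * congrDensity n S K₀ :=
        congrDensity_le_mul_of_volume_le S (hK.smul₀ c) hK₀ ha hvol

end Euclidean

theorem stmt_6_general (n : ℕ) (K K₀ : Set (EuclideanSpace ℝ (Fin n)))
    (hKcomp : IsCompact K) (hKconv : Convex ℝ K)
    (hK₀comp : IsCompact K₀) (hK₀conv : Convex ℝ K₀)
    (hKl : closedBall (0 : EuclideanSpace ℝ (Fin n)) 1 ⊆ K)
    (hK₀l : closedBall (0 : EuclideanSpace ℝ (Fin n)) 1 ⊆ K₀)
    (r : ℝ) (hr : r = hausdorffDist K K₀) :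
    thetaC n K ≤ ENNReal.ofReal ((1 + r) ^ (2 * n)) * thetaC n K₀ := by
  have hc : 0 < 1 + r := by linarith [hr ▸ hausdorffDist_nonneg (s := K) (t := K₀)]
  have hfin : hausdorffEDist K K₀ ≠ ⊤ := hausdorffEDist_ne_top_of_nonempty_of_bounded
    ((nonempty_closedBall.2 zero_le_one).mono hKl) ((nonempty_closedBall.2 zero_le_one).mono hK₀l)
    hKcomp.isBounded hK₀comp.isBounded
  have hKK₀ : K ⊆ (1 + r) • K₀ := by
    rw [hr]
    exact hK₀comp.subset_one_add_hausdorffDist_smul hK₀conv hK₀l hfin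
  have hK₀K : K₀ ⊆ (1 + r) • K := by
    rw [hr, hausdorffDist_comm]
    exact hKcomp.subset_one_add_hausdorffDist_smul hKconv hKl (by rwa [hausdorffEDist_comm])
  have hvol : volume ((1 + r) • K) ≤ ENNReal.ofReal ((1 + r) ^ (2 * n)) * volume K₀ := by
    grw [EuclideanSpace.volume_smul_of_nonneg hc.le, hKK₀,
      EuclideanSpace.volume_smul_of_nonneg hc.le, ← mul_assoc,
      ← ENNReal.ofReal_mul (by positivity), ← pow_add, two_mul]
  exact thetaC_le_mul_of_subset_smul hKcomp.isBounded hK₀comp.isBounded hc hK₀K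
    (ENNReal.ofReal_pos.2 (by positivity)).ne' ofReal_ne_top hvol

/-- Let `K, K₀ ∈ 𝒦^{n*}` and let `r = d_H(K, K₀)` be their Hausdorff distance.
Then `θ^c(K) ≤ (1+r)^{2n} · θ^c(K₀)`. -/
theorem stmt_6 (n : ℕ) (hn : 1 ≤ n) (K K₀ : Set (EuclideanSpace ℝ (Fin n)))
    (hKcomp : IsCompact K) (hKconv : Convex ℝ K) (hKint : (interior K).Nonempty)
    (hK₀comp : IsCompact K₀) (hK₀conv : Convex ℝ K₀) (hK₀int : (interior K₀).Nonempty)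
    (hKl : closedBall (0 : EuclideanSpace ℝ (Fin n)) 1 ⊆ K) (hKu : K ⊆ closedBall 0 n)
    (hK₀l : closedBall (0 : EuclideanSpace ℝ (Fin n)) 1 ⊆ K₀) (hK₀u : K₀ ⊆ closedBall 0 n)
    (r : ℝ) (hr : r = hausdorffDist K K₀) :
    thetaC n K ≤ ENNReal.ofReal ((1 + r) ^ (2 * n)) * thetaC n K₀ :=
  stmt_6_general n K K₀ hKcomp hKconv hK₀comp hK₀conv hKl hK₀l r hr
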